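/- Let T₁ = {v ∈ ℤ⁶ : Q₂(v) ∈ 2ℤ} be the even sublattice of the odd unimodular lattice (ℤ⁶, Q₂), regarded inside ℚ⁶. Then ℤ⁶ is the unique subgroup L of ℚ⁶ satisfying: T₁ ⊆ L, the index [L : T₁] equals 2, and B₂(v,w) ∈ ℤ for all v, w ∈ L. In other words, T₁ has a unique integral overlattice of index 2 inside T₁ ⊗ ℚ, namely ℤ⁶. -/

import Mathlib

/-!
`T₁` is the lattice `D₆` of integer vectors with even coordinate sum. A vector pairing integrally
with `2eᵢ` and `e₀ ± eᵢ` lies in `½ℤ⁶` with all coordinates congruent modulo `ℤ`, so the dual of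
`T₁` is `ℤ⁶ ∪ (ℤ⁶ + ½𝟙)`. On the coset `ℤ⁶ + ½𝟙` the norm `B₂(v, v)` is `¼ Q₂(2v)` with `2v` odd,
and odd squares are `1 mod 4`, so `B₂(v, v) ≡ ¼ (1 + 1 - 1 - 1 - 1 - 1) = -½ mod ℤ`. Hence every
integral overlattice of `T₁` lies in `ℤ⁶`, and as `[ℤ⁶ : T₁] = 2` the one of index 2 is `ℤ⁶`.
-/

def Q2 (v : Fin 6 → ℤ) : ℤ :=
  v 0 ^ 2 + v 1 ^ 2 - v 2 ^ 2 - v 3 ^ 2 - v 4 ^ 2 - v 5 ^ 2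

def B2 (v w : Fin 6 → ℤ) : ℤ :=
  v 0 * w 0 + v 1 * w 1 - v 2 * w 2 - v 3 * w 3 - v 4 * w 4 - v 5 * w 5

def B2Q (v w : Fin 6 → ℚ) : ℚ :=
  v 0 * w 0 + v 1 * w 1 - v 2 * w 2 - v 3 * w 3 - v 4 * w 4 - v 5 * w 5

def T1 : AddSubgroup (Fin 6 → ℤ) where
  carrier := {v | ∃ n : ℤ, Q2 v = 2 * n}
  zero_mem' := ⟨0, by simp [Q2]⟩
  add_mem' := by
    rintro a b ⟨m, hm⟩ ⟨n, hn⟩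
    exact ⟨m + n + B2 a b, by
      simp only [Q2, B2, Pi.add_apply] at *
      linear_combination hm + hn⟩
  neg_mem' := by
    rintro a ⟨n, hn⟩
    exact ⟨n, by
      simp only [Q2, Pi.neg_apply] at *
      linear_combination hn⟩

def castHom : (Fin 6 → ℤ) →+ (Fin 6 → ℚ) where
  toFun v := fun i => (v i : ℚ)
  map_zero' := by funext i; simp
  map_add' a b := by funext i; push_cast; simp

@[to_additive]
theorem Subgroup.eq_of_le_of_relIndex_eq {G : Type*} [Group G] {H K L : Subgroup G}
    (hHK : H ≤ K) (hKL : K ≤ L) (h : H.relIndex K = H.relIndex L) (hL : H.relIndex L ≠ 0) :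
    K = L := by
  have hmul := H.relIndex_mul_relIndex K L hHK hKL
  rw [← h] at hmul hL
  exact le_antisymm hKL (Subgroup.relIndex_eq_one.mp
    (Nat.eq_of_mul_eq_mul_left (Nat.pos_of_ne_zero hL) (hmul.trans (mul_one _).symm)))

lemma castHom_apply (v : Fin 6 → ℤ) (i : Fin 6) : castHom v i = v i := rfl

lemma castHom_injective : Function.Injective castHom := Int.cast_injective.comp_left

lemma B2Q_castHom_castHom (a b : Fin 6 → ℤ) : B2Q (castHom a) (castHom b) = B2 a b := by
  simp only [B2Q, B2, castHom_apply]
  push_cast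
  ring

lemma B2Q_sub_right (v w w' : Fin 6 → ℚ) : B2Q v (w - w') = B2Q v w - B2Q v w' := by
  simp only [B2Q, Pi.sub_apply]
  ring

lemma mem_T1_iff {u : Fin 6 → ℤ} : u ∈ T1 ↔ Even (∑ i, u i) := by
  have : u ∈ T1 ↔ Even (Q2 u) := by
    simp only [T1, AddSubgroup.mem_mk, AddSubmonoid.mem_mk, AddSubsemigroup.mem_mk,
      Set.mem_ofPred_eq, even_iff_two_dvd, Dvd.dvd]
  rw [this, Fin.sum_univ_six]
  simp [Q2, Int.even_add, Int.even_sub, Int.even_pow]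

lemma index_T1 : T1.index = 2 := by
  refine AddSubgroup.index_eq_two_iff.mpr ⟨Pi.single 0 1, fun u => ?_⟩
  simp only [mem_T1_iff, Pi.add_apply, Finset.sum_add_distrib, Finset.sum_pi_single',
    Finset.mem_univ, if_true]
  rw [Int.even_add_one]
  exact xor_not_left.mpr Iff.rfl

lemma relIndex_map_T1_range : (T1.map castHom).relIndex castHom.range = 2 := by
  rw [AddMonoidHom.range_eq_map, AddSubgroup.relIndex_map_map_of_injective _ _ castHom_injective,
    AddSubgroup.relIndex_top_right, index_T1]

def b2Sign : Fin 6 → ℤ := ![1, 1, -1, -1, -1, -1]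

lemma B2Q_castHom_single_b2Sign_mul (v : Fin 6 → ℚ) (i : Fin 6) (c : ℤ) :
    B2Q v (castHom (Pi.single i (b2Sign i * c))) = c * v i := by
  fin_cases i <;> simp [B2Q, castHom_apply, b2Sign, mul_comm]

lemma single_b2Sign_mul_two_mem_T1 (i : Fin 6) : Pi.single i (b2Sign i * 2) ∈ T1 :=
  mem_T1_iff.mpr (by simp)

lemma single_b2Sign_sub_single_b2Sign_mem_T1 (i : Fin 6) :
    Pi.single 0 (b2Sign 0 * 1) - Pi.single i (b2Sign i * 1) ∈ T1 := by
  rw [mem_T1_iff]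
  fin_cases i <;> decide

lemma exists_castHom_eq_two_smul_of_pairing {v : Fin 6 → ℚ}
    (hv : ∀ w ∈ T1, ∃ n : ℤ, B2Q v (castHom w) = n) :
    ∃ u : Fin 6 → ℤ, castHom u = 2 • v ∧ ∀ i, Even (u i - u 0) := by
  have htwo i := hv _ (single_b2Sign_mul_two_mem_T1 i)
  have hsub i := hv _ (single_b2Sign_sub_single_b2Sign_mem_T1 i)
  simp only [map_sub, B2Q_sub_right, B2Q_castHom_single_b2Sign_mul, Int.cast_one, one_mul,
    Int.cast_ofNat] at htwo hsub
  choose u hu using htwo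
  refine ⟨u, funext fun i => by simp [castHom_apply, hu], fun i => ?_⟩
  obtain ⟨n, hn⟩ := hsub i
  refine ⟨-n, ?_⟩
  have : ((u i - u 0 : ℤ) : ℚ) = -n + -n := by push_cast; rw [← hu, ← hu, ← hn]; ring
  exact_mod_cast this

lemma Q2_emod_four_of_odd {u : Fin 6 → ℤ} (hu : ∀ i, Odd (u i)) : Q2 u % 4 = 2 := by
  have h := fun i => Int.sq_mod_four_eq_one_of_odd (hu i)
  have := h 0; have := h 1; have := h 2; have := h 3; have := h 4; have := h 5
  unfold Q2
  omega

lemma Q2_eq_four_mul_B2Q {u : Fin 6 → ℤ} {v : Fin 6 → ℚ} (h : castHom u = 2 • v) :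
    (Q2 u : ℚ) = 4 * B2Q v v := by
  have hu i : (u i : ℚ) = 2 * v i := by simpa [castHom_apply] using congrFun h i
  simp only [Q2, B2Q, Int.cast_sub, Int.cast_add, Int.cast_pow, hu]
  ring

lemma mem_range_castHom_of_pairing {v : Fin 6 → ℚ}
    (hT : ∀ w ∈ T1, ∃ n : ℤ, B2Q v (castHom w) = n) (hv : ∃ n : ℤ, B2Q v v = n) :
    v ∈ castHom.range := by
  obtain ⟨u, hu, hdiff⟩ := exists_castHom_eq_two_smul_of_pairing hT
  obtain ⟨n, hn⟩ := hv
  have hQ : Q2 u = 4 * n := by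
    have : (Q2 u : ℚ) = ((4 * n : ℤ) : ℚ) := by rw [Q2_eq_four_mul_B2Q hu, hn]; push_cast; rfl
    exact_mod_cast this
  have hpar i : Even (u i) ↔ Even (u 0) := Int.even_sub.mp (hdiff i)
  have heven : Even (u 0) := by
    by_contra h0
    have hodd i : Odd (u i) := Int.not_even_iff_odd.mp fun h => h0 ((hpar i).mp h)
    have := Q2_emod_four_of_odd hodd
    omega
  choose w hw using fun i => (hpar i).mpr heven
  refine ⟨w, funext fun i => ?_⟩
  have := congrFun hu i
  simp only [castHom_apply, hw, Pi.smul_apply, nsmul_eq_mul, Nat.cast_ofNat] at this ⊢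
  push_cast at this
  linarith

lemma le_range_castHom_of_integral {L : AddSubgroup (Fin 6 → ℚ)} (hT : T1.map castHom ≤ L)
    (hL : ∀ v ∈ L, ∀ w ∈ L, ∃ n : ℤ, B2Q v w = n) : L ≤ castHom.range := fun v hv =>
  mem_range_castHom_of_pairing (fun w hw => hL v hv _ (hT ⟨w, hw, rfl⟩)) (hL v hv v hv)

/-- `ℤ⁶` is the unique integral overlattice of the even sublattice `T₁` of index 2
inside `T₁ ⊗ ℚ = ℚ⁶`. -/
theorem unique_integral_overlattice :
    ∀ L : AddSubgroup (Fin 6 → ℚ),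
      (T1.map castHom ≤ L ∧
       ((T1.map castHom).addSubgroupOf L).index = 2 ∧
       ∀ v ∈ L, ∀ w ∈ L, ∃ n : ℤ, B2Q v w = n) ↔
      L = castHom.range := by
  intro L
  constructor
  · rintro ⟨hT, hindex, hL⟩
    exact AddSubgroup.eq_of_le_of_relIndex_eq hT (le_range_castHom_of_integral hT hL)
      (hindex.trans relIndex_map_T1_range.symm) (by rw [relIndex_map_T1_range]; norm_num)
  · rintro rfl
    refine ⟨AddSubgroup.map_le_range _ _, relIndex_map_T1_range, ?_⟩
    rintro _ ⟨a, rfl⟩ _ ⟨b, rfl⟩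
    exact ⟨B2 a b, B2Q_castHom_castHom a b⟩
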